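/- Let 0 < b < a, let A be the 2 × 2 real matrix with rows A₁ = (a, a) and A₂ = (b, −b), let β ∈ ℝ², and let f : ℝ² → ℝ, f(x) = (1/2)·‖Ax − β‖². Set L = 2a² and μ = 2b² (so every eigenvalue of AᵀA lies in [μ, L]). Let x, w ∈ ℝ² satisfy x − w = (c, −c) for some c ≠ 0, and set c_{j,i} = A_{j,i}·(x_i − w_i) for j, i ∈ {1, 2}. On a probability space let J be uniform on {1, 2} and let Y_{j,i} (j, i ∈ {1,2}) be square-integrable real random variables such that for each fixed j the pair (Y_{j,1}, Y_{j,2}) is independent, E[Y_{j,i}] = c_{j,i} and E[Y_{j,i}²] = ω·c_{j,i}² for some ω ≥ 1, with J independent of all the Y_{j,i}. Define g = 2·(Y_{J,1} + Y_{J,2})·A_J + ∇f(w). Then E[‖g − ∇f(x)‖²] ≥ (ω − 1)·(L²/(2μ²))·‖∇f(x) − ∇f(w)‖². -/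

import Mathlib

/-!
Write `r₀ = (a, a)`, `r₁ = (b, -b)` for the rows of `A` and `D = ∇f x - ∇f w = AᵀA (x - w)`.
As `x - w = (c, -c)` is orthogonal to `r₀`, `D = 2bc • r₁` is orthogonal to `r₀` too and
`‖D‖² = 8b⁴c²`. On the event `J = 0` the error is `‖2(Y₀₀ + Y₀₁) • r₀ - D‖²`, and the two
compressed contributions `±ac` cancel in mean but not in variance:
`E[(Y₀₀ + Y₀₁)²] = 2(ω - 1)a²c²`. By orthogonality this event alone contributes
`½ · 4 · 2(ω - 1)a²c² · 2a² = 8(ω - 1)a⁴c²`, twice the bound `(ω - 1)·L²/(2μ²)·‖D‖² = 4(ω - 1)a⁴c²`.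
-/

open MeasureTheory ProbabilityTheory
open scoped RealInnerProductSpace ENNReal

/-- The `j`-th row of the matrix `A`, viewed as a vector of `ℝ^d`. -/
noncomputable def matRow {s d : ℕ} (A : Matrix (Fin s) (Fin d) ℝ) (j : Fin s) :
    EuclideanSpace ℝ (Fin d) :=
  WithLp.toLp 2 (fun t => A j t)

section Probability

variable {Ω : Type*} [MeasurableSpace Ω] {μ : Measure Ω}

theorem integral_comp_eq_sum_of_indepFun {ι β : Type*} [Fintype ι] [MeasurableSpace ι]
    [DiscreteMeasurableSpace ι] [MeasurableSpace β] [IsFiniteMeasure μ]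
    {J : Ω → ι} {X : Ω → β} (hJ : Measurable J) (hJX : IndepFun J X μ)
    {F : ι → β → ℝ} (hF : ∀ i, Measurable (F i))
    (hFX : ∀ i, Integrable (fun ω => F i (X ω)) μ) :
    ∫ ω, F (J ω) (X ω) ∂μ = ∑ i, μ.real {ω | J ω = i} * ∫ ω, F i (X ω) ∂μ := by
  classical
  set e : ι → ι → ℝ := fun i k => if k = i then 1 else 0
  have he (i : ι) : Measurable (e i) := Measurable.of_discrete
  have hsplit (ω : Ω) : F (J ω) (X ω) = ∑ i, e i (J ω) * F i (X ω) := by simp [e]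
  -- `e i ∘ J` is definitionally the indicator function of `J ⁻¹' {i}`.
  have heJ (i : ι) : Integrable (fun ω => e i (J ω)) μ :=
    (integrable_const (1 : ℝ)).indicator (hJ (measurableSet_singleton i))
  have hmean (i : ι) : ∫ ω, e i (J ω) ∂μ = μ.real {ω | J ω = i} :=
    integral_indicator_one (hJ (measurableSet_singleton i))
  simp_rw [hsplit]
  rw [integral_finsetSum _ fun i _ => ?_]
  · refine Finset.sum_congr rfl fun i _ => ?_
    rw [← hmean i]
    exact ((hJX.comp (he i) (hF i)).integral_fun_mul_eq_mul_integral
      (heJ i).aestronglyMeasurable (hFX i).aestronglyMeasurable)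
  · exact (hFX i).bdd_mul (c := 1) ((he i).comp hJ).aestronglyMeasurable
      (Filter.Eventually.of_forall fun ω => by by_cases h : J ω = i <;> simp [e, h])

theorem measureReal_mul_integral_le_integral_comp_of_indepFun {ι β : Type*} [Fintype ι]
    [MeasurableSpace ι] [DiscreteMeasurableSpace ι] [MeasurableSpace β] [IsFiniteMeasure μ]
    {J : Ω → ι} {X : Ω → β} (hJ : Measurable J) (hJX : IndepFun J X μ)
    {F : ι → β → ℝ} (hF : ∀ i, Measurable (F i)) (hF0 : ∀ i y, 0 ≤ F i y)
    (hFX : ∀ i, Integrable (fun ω => F i (X ω)) μ) (i : ι) :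
    μ.real {ω | J ω = i} * ∫ ω, F i (X ω) ∂μ ≤ ∫ ω, F (J ω) (X ω) ∂μ := by
  rw [integral_comp_eq_sum_of_indepFun hJ hJX hF hFX]
  exact Finset.single_le_sum (f := fun i => μ.real {ω | J ω = i} * ∫ ω, F i (X ω) ∂μ)
    (fun k _ => mul_nonneg measureReal_nonneg (integral_nonneg fun ω => hF0 k (X ω)))
    (Finset.mem_univ i)

theorem integral_add_sq_of_indepFun [IsProbabilityMeasure μ] {X Y : Ω → ℝ}
    (hX : MemLp X 2 μ) (hY : MemLp Y 2 μ) (hXY : IndepFun X Y μ) :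
    ∫ ω, (X ω + Y ω) ^ 2 ∂μ
      = ∫ ω, X ω ^ 2 ∂μ + ∫ ω, Y ω ^ 2 ∂μ + 2 * (∫ ω, X ω ∂μ) * ∫ ω, Y ω ∂μ := by
  have h := hXY.variance_add hX hY
  rw [variance_eq_sub (hX.add hY), variance_eq_sub hX, variance_eq_sub hY] at h
  simp only [Pi.pow_apply, Pi.add_apply] at h
  rw [integral_add (hX.integrable one_le_two) (hY.integrable one_le_two)] at h
  linarith

theorem integral_add_sq_of_second_moment_eq [IsProbabilityMeasure μ] {X Y : Ω → ℝ}
    (hX : MemLp X 2 μ) (hY : MemLp Y 2 μ) (hXY : IndepFun X Y μ) {ω₀ c₁ c₂ : ℝ}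
    (hX1 : ∫ ω, X ω ∂μ = c₁) (hY1 : ∫ ω, Y ω ∂μ = c₂)
    (hX2 : ∫ ω, X ω ^ 2 ∂μ = ω₀ * c₁ ^ 2) (hY2 : ∫ ω, Y ω ^ 2 ∂μ = ω₀ * c₂ ^ 2) :
    ∫ ω, (X ω + Y ω) ^ 2 ∂μ = (ω₀ - 1) * (c₁ ^ 2 + c₂ ^ 2) + (c₁ + c₂) ^ 2 := by
  rw [integral_add_sq_of_indepFun hX hY hXY, hX1, hY1, hX2, hY2]
  ring

variable {E : Type*} [NormedAddCommGroup E] [InnerProductSpace ℝ E]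

theorem norm_smul_sub_sq_real (s : ℝ) (u v : E) :
    ‖s • u - v‖ ^ 2 = s ^ 2 * ‖u‖ ^ 2 - 2 * s * ⟪u, v⟫ + ‖v‖ ^ 2 := by
  rw [norm_sub_sq_real, norm_smul, real_inner_smul_left, mul_pow, Real.norm_eq_abs, sq_abs]
  ring

variable [IsProbabilityMeasure μ] {S : Ω → ℝ}

theorem MeasureTheory.MemLp.integrable_norm_smul_sub_sq (hS : MemLp S 2 μ) (u v : E) :
    Integrable (fun ω => ‖S ω • u - v‖ ^ 2) μ := by
  simp_rw [norm_smul_sub_sq_real]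
  exact ((hS.integrable_sq.mul_const _).sub'
    (((hS.integrable one_le_two).const_mul 2).mul_const _)).add (integrable_const _)

theorem integral_norm_smul_sub_sq (hS : MemLp S 2 μ) (u v : E) :
    ∫ ω, ‖S ω • u - v‖ ^ 2 ∂μ
      = (∫ ω, S ω ^ 2 ∂μ) * ‖u‖ ^ 2 - 2 * (∫ ω, S ω ∂μ) * ⟪u, v⟫ + ‖v‖ ^ 2 := by
  have hS1 := (hS.integrable one_le_two).const_mul 2
  simp_rw [norm_smul_sub_sq_real]
  rw [integral_add ((hS.integrable_sq.mul_const _).sub' (hS1.mul_const _)) (integrable_const _),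
    integral_sub (hS.integrable_sq.mul_const _) (hS1.mul_const _), integral_mul_const,
    integral_mul_const, integral_const_mul]
  simp

theorem mul_norm_sq_le_integral_norm_smul_sub_sq_of_inner_eq_zero (hS : MemLp S 2 μ) {u v : E}
    (huv : ⟪u, v⟫ = 0) :
    (∫ ω, S ω ^ 2 ∂μ) * ‖u‖ ^ 2 ≤ ∫ ω, ‖S ω • u - v‖ ^ 2 ∂μ := by
  rw [integral_norm_smul_sub_sq hS, huv]
  nlinarith [sq_nonneg ‖v‖]

end Probability

section LeastSquares

variable {E ι : Type*} [NormedAddCommGroup E] [InnerProductSpace ℝ E] [CompleteSpace E]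
  [Fintype ι]

theorem hasGradientAt_half_sum_sq_inner_sub (r : ι → E) (β : ι → ℝ) (v : E) :
    HasGradientAt (fun v => (1 / 2 : ℝ) * ∑ j, (⟪r j, v⟫ - β j) ^ 2)
      (∑ j, (⟪r j, v⟫ - β j) • r j) v := by
  have hterm (j : ι) : HasFDerivAt (fun v => (⟪r j, v⟫ - β j) ^ 2)
      ((2 * (⟪r j, v⟫ - β j)) • innerSL ℝ (r j)) v := by
    simpa using (((innerSL ℝ (r j)).hasFDerivAt (x := v)).sub_const (β j)).pow 2
  rw [hasGradientAt_iff_hasFDerivAt]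
  refine ((HasFDerivAt.fun_sum fun j _ => hterm j).const_mul (1 / 2 : ℝ)).congr_fderiv ?_
  ext u
  simp [Finset.mul_sum, ← mul_assoc]

theorem gradient_half_sum_sq_inner_sub_sub (r : ι → E) (β : ι → ℝ) (x w : E) :
    gradient (fun v => (1 / 2 : ℝ) * ∑ j, (⟪r j, v⟫ - β j) ^ 2) x
      - gradient (fun v => (1 / 2 : ℝ) * ∑ j, (⟪r j, v⟫ - β j) ^ 2) w
      = ∑ j, ⟪r j, x - w⟫ • r j := by
  simp only [(hasGradientAt_half_sum_sq_inner_sub r β _).gradient, ← Finset.sum_sub_distrib,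
    ← sub_smul, inner_sub_right, sub_sub_sub_cancel_right]

end LeastSquares

theorem inner_matRow {s d : ℕ} (A : Matrix (Fin s) (Fin d) ℝ) (j : Fin s)
    (v : EuclideanSpace ℝ (Fin d)) : ⟪matRow A j, v⟫ = ∑ t, A j t * v t := by
  simp [PiLp.inner_apply, matRow, mul_comm]

theorem norm_matRow_sq {s d : ℕ} (A : Matrix (Fin s) (Fin d) ℝ) (j : Fin s) :
    ‖matRow A j‖ ^ 2 = ∑ t, A j t ^ 2 := by
  rw [← real_inner_self_eq_norm_sq, inner_matRow]
  simp [matRow, sq]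

section TwoByTwo

variable {a b cc : ℝ}

theorem inner_matRow_eq_of_sub_eq (A : Matrix (Fin 2) (Fin 2) ℝ) {x w : EuclideanSpace ℝ (Fin 2)}
    (hxw0 : x 0 - w 0 = cc) (hxw1 : x 1 - w 1 = -cc) (j : Fin 2) :
    ⟪matRow A j, x - w⟫ = (A j 0 - A j 1) * cc := by
  rw [inner_matRow, Fin.sum_univ_two, PiLp.sub_apply, PiLp.sub_apply, hxw0, hxw1]
  ring

theorem gradient_sub_gradient_eq_smul_matRow_one {β : Fin 2 → ℝ}
    {f : EuclideanSpace ℝ (Fin 2) → ℝ}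
    (hf : f = fun v => (1 / 2 : ℝ) * ∑ j, (⟪matRow !![a, a; b, -b] j, v⟫ - β j) ^ 2)
    {x w : EuclideanSpace ℝ (Fin 2)} (hxw0 : x 0 - w 0 = cc) (hxw1 : x 1 - w 1 = -cc) :
    gradient f x - gradient f w = (2 * b * cc) • matRow !![a, a; b, -b] 1 := by
  rw [hf, gradient_half_sum_sq_inner_sub_sub, Fin.sum_univ_two,
    inner_matRow_eq_of_sub_eq _ hxw0 hxw1, inner_matRow_eq_of_sub_eq _ hxw0 hxw1]
  simp [two_mul]

theorem inner_matRow_zero_smul_matRow_one (t : ℝ) :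
    ⟪matRow !![a, a; b, -b] 0, t • matRow !![a, a; b, -b] 1⟫ = 0 := by
  rw [real_inner_smul_right, inner_matRow]
  simp [Fin.sum_univ_two, matRow]

theorem norm_smul_matRow_zero_sq (t : ℝ) :
    ‖t • matRow !![a, a; b, -b] 0‖ ^ 2 = 2 * t ^ 2 * a ^ 2 := by
  rw [norm_smul, mul_pow, norm_matRow_sq, Real.norm_eq_abs, sq_abs]
  simp only [Fin.sum_univ_two, Matrix.of_apply, Matrix.cons_val', Matrix.cons_val_zero,
    Matrix.cons_val_one, Matrix.cons_val_fin_one]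
  ring

theorem norm_smul_matRow_one_sq (t : ℝ) :
    ‖t • matRow !![a, a; b, -b] 1‖ ^ 2 = 2 * t ^ 2 * b ^ 2 := by
  rw [norm_smul, mul_pow, norm_matRow_sq, Real.norm_eq_abs, sq_abs]
  simp only [Fin.sum_univ_two, Matrix.of_apply, Matrix.cons_val', Matrix.cons_val_zero,
    Matrix.cons_val_one, Matrix.cons_val_fin_one]
  ring

end TwoByTwo

section SampledEstimator

variable {Ω : Type*} [MeasurableSpace Ω] {μ : Measure Ω} {s d : ℕ}

noncomputable def sampledRowEstimator (A : Matrix (Fin s) (Fin d) ℝ) (J : Ω → Fin s)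
    (Y : Fin s → Fin d → Ω → ℝ) (κ : ℝ) (v : EuclideanSpace ℝ (Fin d)) (ω : Ω) :
    EuclideanSpace ℝ (Fin d) :=
  (κ * ∑ i, Y (J ω) i ω) • matRow A (J ω) + v

theorem measureReal_mul_le_integral_norm_sampledRowEstimator_sub_sq [IsProbabilityMeasure μ]
    (A : Matrix (Fin s) (Fin d) ℝ) {J : Ω → Fin s} (hJ : Measurable J)
    {Y : Fin s → Fin d → Ω → ℝ} (hY2 : ∀ j i, MemLp (Y j i) 2 μ)
    (hJY : IndepFun J (fun ω => fun q : Fin s × Fin d => Y q.1 q.2 ω) μ)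
    (κ : ℝ) {v y : EuclideanSpace ℝ (Fin d)} {j : Fin s} (hj : ⟪matRow A j, y - v⟫ = 0) :
    μ.real {ω | J ω = j} * ((∫ ω, (∑ i, Y j i ω) ^ 2 ∂μ) * ‖κ • matRow A j‖ ^ 2)
      ≤ ∫ ω, ‖sampledRowEstimator A J Y κ v ω - y‖ ^ 2 ∂μ := by
  have hS (k : Fin s) : MemLp (fun ω => ∑ i, Y k i ω) 2 μ :=
    memLp_finsetSum _ fun i _ => hY2 k i
  set F : Fin s → (Fin s × Fin d → ℝ) → ℝ :=
    fun k z => ‖(∑ i, z (k, i)) • (κ • matRow A k) - (y - v)‖ ^ 2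
  have hF (ω : Ω) :
      ‖sampledRowEstimator A J Y κ v ω - y‖ ^ 2 = F (J ω) (fun q => Y q.1 q.2 ω) := by
    simp only [F, sampledRowEstimator, smul_smul, mul_comm _ κ]
    congr 2
    abel
  simp_rw [hF]
  calc _ ≤ μ.real {ω | J ω = j} * ∫ ω, F j (fun q => Y q.1 q.2 ω) ∂μ := by
        gcongr
        exact mul_norm_sq_le_integral_norm_smul_sub_sq_of_inner_eq_zero (hS j)
          (by rw [real_inner_smul_left, hj, mul_zero])
    _ ≤ _ := measureReal_mul_integral_le_integral_comp_of_indepFun (F := F) hJ hJY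
        (fun k => by fun_prop) (fun _ _ => sq_nonneg _)
        (fun k => (hS k).integrable_norm_smul_sub_sq _ _) j

end SampledEstimator

theorem dvpl_katyusha_scalar_compression_lower_bound_general
    {a b : ℝ} (hb : 0 < b)
    (A : Matrix (Fin 2) (Fin 2) ℝ) (hA : A = !![a, a; b, -b])
    (βv : Fin 2 → ℝ)
    (f : EuclideanSpace ℝ (Fin 2) → ℝ)
    (hf : f = fun v => (1 / 2 : ℝ) * ∑ j, ((∑ t, A j t * v t) - βv j) ^ 2)
    {L μ : ℝ} (hL : L = 2 * a ^ 2) (hμ : μ = 2 * b ^ 2)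
    (x w : EuclideanSpace ℝ (Fin 2))
    {cc : ℝ}
    (hxw0 : x 0 - w 0 = cc) (hxw1 : x 1 - w 1 = -cc)
    (c : Fin 2 → Fin 2 → ℝ)
    (hc : ∀ j i : Fin 2, c j i = A j i * (x i - w i))
    {Ω : Type*} [MeasureSpace Ω] [IsProbabilityMeasure (ℙ : Measure Ω)]
    (J : Ω → Fin 2) (hJmeas : Measurable J)
    (hJunif : ∀ j : Fin 2, ℙ {ω | J ω = j} = (2 : ℝ≥0∞)⁻¹)
    (Y : Fin 2 → Fin 2 → Ω → ℝ)
    (hY2 : ∀ j i, MemLp (Y j i) 2 ℙ)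
    (hYindep : ∀ j, IndepFun (Y j 0) (Y j 1) ℙ)
    {ω₀ : ℝ} (hω₀ : 1 ≤ ω₀)
    (hYmean : ∀ j i, ∫ ω, Y j i ω ∂ℙ = c j i)
    (hYsecond : ∀ j i, ∫ ω, (Y j i ω) ^ 2 ∂ℙ = ω₀ * (c j i) ^ 2)
    (hJY : IndepFun J (fun ω => fun q : Fin 2 × Fin 2 => Y q.1 q.2 ω) ℙ)
    (g : Ω → EuclideanSpace ℝ (Fin 2))
    (hg : ∀ ω, g ω = (2 * (Y (J ω) 0 ω + Y (J ω) 1 ω)) • matRow A (J ω) + gradient f w) :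
    ∫ ω, ‖g ω - gradient f x‖ ^ 2 ∂ℙ
      ≥ (ω₀ - 1) * (L ^ 2 / (2 * μ ^ 2)) * ‖gradient f x - gradient f w‖ ^ 2 := by
  subst hA
  have hD : gradient f x - gradient f w = (2 * b * cc) • matRow !![a, a; b, -b] 1 := by
    refine gradient_sub_gradient_eq_smul_matRow_one (β := βv) ?_ hxw0 hxw1
    simp only [hf, inner_matRow]
  have hS0 : ∫ ω, (∑ i, Y 0 i ω) ^ 2 = 2 * (ω₀ - 1) * a ^ 2 * cc ^ 2 := by
    simp only [Fin.sum_univ_two]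
    rw [integral_add_sq_of_second_moment_eq (hY2 0 0) (hY2 0 1) (hYindep 0) (hYmean 0 0)
      (hYmean 0 1) (hYsecond 0 0) (hYsecond 0 1), hc, hc]
    simp only [Matrix.of_apply, Matrix.cons_val', Matrix.cons_val_zero, Matrix.cons_val_one,
      Matrix.cons_val_fin_one, hxw0, hxw1]
    ring
  have hJ0 : (ℙ : Measure Ω).real {ω | J ω = 0} = 1 / 2 := by simp [measureReal_def, hJunif]
  have hlower := measureReal_mul_le_integral_norm_sampledRowEstimator_sub_sq (μ := ℙ)
    (v := gradient f w) (y := gradient f x) (j := 0) _ hJmeas hY2 hJY 2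
    (hD ▸ inner_matRow_zero_smul_matRow_one _)
  have hgS : g = sampledRowEstimator !![a, a; b, -b] J Y 2 (gradient f w) := by
    funext ω
    simp only [hg, sampledRowEstimator, Fin.sum_univ_two]
  rw [hgS, ge_iff_le, hD, hL, hμ]
  refine le_trans ?_ hlower
  rw [hJ0, hS0, norm_smul_matRow_zero_sq, norm_smul_matRow_one_sq]
  field_simp
  have : 0 ≤ (ω₀ - 1) * a ^ 4 * cc ^ 2 :=
    mul_nonneg (mul_nonneg (sub_nonneg.2 hω₀) (by positivity)) (sq_nonneg cc)
  nlinarith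

/-- **Lower-bound construction for DVPL-Katyusha with scalar compression on the MSE loss**,
showing the efficient Lipschitz constant can be proportional to `(ω − 1)·L³/μ²`: let
`0 < b < a`, `A = !![a, a; b, −b]`, `f(x) = (1/2)·‖Ax − β‖²`, `L = 2a²`, `μ = 2b²`, and let
`x − w = (c, −c)` with `c ≠ 0` (orthogonal to the top row `A₁`). The two workers each own
one coordinate and transmit exact-second-moment unbiased compressions `Y_{j,i}` of their
scalar contributions `c_{j,i} = A_{j,i}(x_i − w_i)` (independent across `i` for fixed `j`),
a sample `J` is drawn uniformly on `{1, 2}` independently of the `Y_{j,i}`, and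
`g = 2·(Y_{J,1} + Y_{J,2})·A_J + ∇f(w)`. Then
`E[‖g − ∇f(x)‖²] ≥ (ω − 1)·(L²/(2μ²))·‖∇f(x) − ∇f(w)‖²`. -/
theorem dvpl_katyusha_scalar_compression_lower_bound
    {a b : ℝ} (hb : 0 < b) (hba : b < a)
    (A : Matrix (Fin 2) (Fin 2) ℝ) (hA : A = !![a, a; b, -b])
    (βv : Fin 2 → ℝ)
    (f : EuclideanSpace ℝ (Fin 2) → ℝ)
    (hf : f = fun v => (1 / 2 : ℝ) * ∑ j, ((∑ t, A j t * v t) - βv j) ^ 2)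
    {L μ : ℝ} (hL : L = 2 * a ^ 2) (hμ : μ = 2 * b ^ 2)
    (x w : EuclideanSpace ℝ (Fin 2))
    {cc : ℝ} (hcc : cc ≠ 0)
    (hxw0 : x 0 - w 0 = cc) (hxw1 : x 1 - w 1 = -cc)
    (c : Fin 2 → Fin 2 → ℝ)
    (hc : ∀ j i : Fin 2, c j i = A j i * (x i - w i))
    {Ω : Type*} [MeasureSpace Ω] [IsProbabilityMeasure (ℙ : Measure Ω)]
    (J : Ω → Fin 2) (hJmeas : Measurable J)
    (hJunif : ∀ j : Fin 2, ℙ {ω | J ω = j} = (2 : ℝ≥0∞)⁻¹)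
    (Y : Fin 2 → Fin 2 → Ω → ℝ)
    (hYmeas : ∀ j i, Measurable (Y j i))
    (hY2 : ∀ j i, MemLp (Y j i) 2 ℙ)
    (hYindep : ∀ j, IndepFun (Y j 0) (Y j 1) ℙ)
    {ω₀ : ℝ} (hω₀ : 1 ≤ ω₀)
    (hYmean : ∀ j i, ∫ ω, Y j i ω ∂ℙ = c j i)
    (hYsecond : ∀ j i, ∫ ω, (Y j i ω) ^ 2 ∂ℙ = ω₀ * (c j i) ^ 2)
    (hJY : IndepFun J (fun ω => fun q : Fin 2 × Fin 2 => Y q.1 q.2 ω) ℙ)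
    (g : Ω → EuclideanSpace ℝ (Fin 2))
    (hg : ∀ ω, g ω = (2 * (Y (J ω) 0 ω + Y (J ω) 1 ω)) • matRow A (J ω) + gradient f w) :
    ∫ ω, ‖g ω - gradient f x‖ ^ 2 ∂ℙ
      ≥ (ω₀ - 1) * (L ^ 2 / (2 * μ ^ 2)) * ‖gradient f x - gradient f w‖ ^ 2 :=
  dvpl_katyusha_scalar_compression_lower_bound_general hb A hA βv f hf hL hμ x w hxw0 hxw1 c hc J
    hJmeas hJunif Y hY2 hYindep hω₀ hYmean hYsecond hJY g hg
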